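/- (Theorem 2) Let M = (I, O, Q, q_init, δ, λ) be an IGMM and r : Q → Q a mapping satisfying r(q) ⊑ q for every q ∈ Q. Define M' = (I, O, Q', q'_init, δ', λ) where Q' = r(Q), q'_init = r(q_init), and for q ∈ Q' and i ∈ 𝔹^I, δ'(q,i) = r(δ(q,i)) when δ(q,i) is defined and δ'(q,i) is undefined otherwise, with the output function of M' being the restriction of λ to Q'. Then M' is a specialization of M. -/

import Mathlib

/-- An incompletely specified generalized Mealy machine (IGMM) over input
propositions `I`, output propositions `O`, with state set `Q`.
Input valuations are `I → Bool`, output valuations are `O → Bool`.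
`delta` is the partial transition function, `lam` the output function. -/
structure IGMM (I O Q : Type*) where
  init : Q
  delta : Q → (I → Bool) → Option Q
  lam : Q → (I → Bool) → Set (O → Bool)
  lam_nonempty : ∀ q i, (lam q i).Nonempty
  lam_top : ∀ q i, delta q i = none → lam q i = Set.univ

namespace IGMM

/-- `(ι, o) ⊨ M_q` : either an infinite run, or a finite run ending where `delta`
is undefined. -/
def Sat {I O Q : Type*} (M : IGMM I O Q) (q : Q) (ι : ℕ → I → Bool)
    (o : ℕ → O → Bool) : Prop :=
  (∃ qs : ℕ → Q, qs 0 = q ∧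
      ∀ j : ℕ, M.delta (qs j) (ι j) = some (qs (j + 1)) ∧ o j ∈ M.lam (qs j) (ι j)) ∨
  (∃ (k : ℕ) (qs : ℕ → Q), qs 0 = q ∧
      (∀ j < k, M.delta (qs j) (ι j) = some (qs (j + 1)) ∧ o j ∈ M.lam (qs j) (ι j)) ∧
      M.delta (qs k) (ι k) = none)

/-- The behaviour set `Beh_M(q, ι) = {o | (ι, o) ⊨ M_q}`. -/
def Beh {I O Q : Type*} (M : IGMM I O Q) (q : Q) (ι : ℕ → I → Bool) :
    Set (ℕ → O → Bool) :=
  {o | M.Sat q ι o}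

end IGMM

/-- `q' ⊑ q` : the state `q'` of `M'` is a specialization of the state `q` of `M`. -/
def IGMM.Specializes {I O Q' Q : Type*} (M' : IGMM I O Q') (q' : Q')
    (M : IGMM I O Q) (q : Q) : Prop :=
  ∀ ι : ℕ → I → Bool, M'.Beh q' ι ⊆ M.Beh q ι

/-- `q' ≈ q` : the state `q'` of `M'` is a variation of the state `q` of `M`. -/
def IGMM.IsVariation {I O Q' Q : Type*} (M' : IGMM I O Q') (q' : Q')
    (M : IGMM I O Q) (q : Q) : Prop :=
  ∀ ι : ℕ → I → Bool, (M'.Beh q' ι ∩ M.Beh q ι).Nonempty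

/-- The machine `M'` of Theorem 2: states `Q' = r(Q)`, initial state `r(q_init)`,
`δ'(q, i) = r(δ(q, i))` when `δ(q, i)` is defined (undefined otherwise), and the
output function is the restriction of `λ`. -/
def IGMM.remap {I O Q : Type*} (M : IGMM I O Q) (r : Q → Q) :
    IGMM I O (Set.range r) where
  init := ⟨r M.init, ⟨M.init, rfl⟩⟩
  delta := fun q i => (M.delta q.1 i).map fun p => ⟨r p, ⟨p, rfl⟩⟩
  lam := fun q i => M.lam q.1 i
  lam_nonempty := fun q i => M.lam_nonempty q.1 i
  lam_top := fun q i h => M.lam_top q.1 i (by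
    simp only [Option.map_eq_none_iff] at h
    exact h)

/-! A state's behaviours form a closed set: `o ∈ Beh_M(q, ι)` iff every `o j` lies in `λ` along
the unique run of `ι` from `q`, since `λ` allows every output once `δ` is undefined. So it is
enough that every finite prefix of a behaviour of `M'` from `r(q)` extends to a behaviour of `M`
from `r(q)`. By induction on the length: after the first step, from `r(q)` to `r(p)`, the
induction hypothesis gives a behaviour of `M` from `r(p)`, hence one from `p` because
`r(p) ⊑ p`, and prepending the first step gives one from `r(q)`. -/

namespace IGMM

variable {I O Q : Type*} (M : IGMM I O Q)

def trace (q : Q) (ι : ℕ → I → Bool) : ℕ → Option Q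
  | 0 => some q
  | n + 1 => (trace q ι n).bind fun p => M.delta p (ι n)

variable {M} {q p : Q} {ι : ℕ → I → Bool} {o : ℕ → O → Bool}

@[simp]
theorem trace_zero : M.trace q ι 0 = some q := rfl

theorem trace_succ_of_eq_some {j : ℕ} (h : M.trace q ι j = some p) :
    M.trace q ι (j + 1) = M.delta p (ι j) := by
  simp [trace, h]

theorem trace_eq_none_of_le {i j : ℕ} (h : M.trace q ι i = none) (hij : i ≤ j) :
    M.trace q ι j = none := by
  induction j, hij using Nat.le_induction with
  | base => exact h
  | succ j _ ih => simp [trace, ih]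

theorem trace_eq_some_of_run {qs : ℕ → Q} {n : ℕ} (h0 : qs 0 = q)
    (hs : ∀ j < n, M.delta (qs j) (ι j) = some (qs (j + 1))) :
    ∀ j ≤ n, M.trace q ι j = some (qs j) := by
  intro j hj
  induction j with
  | zero => simp [h0]
  | succ j ih => rw [trace_succ_of_eq_some (ih (by omega)), hs j (by omega)]

theorem trace_succ_of_delta_eq_some {q₁ : Q} (h : M.delta q (ι 0) = some q₁) (j : ℕ) :
    M.trace q ι (j + 1) = M.trace q₁ (fun j => ι (j + 1)) j := by
  induction j with
  | zero => simp [trace, h]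
  | succ j ih => simp only [trace] at ih ⊢; rw [ih]

theorem Sat.mem_lam_of_trace (hsat : M.Sat q ι o) {j : ℕ} (hp : M.trace q ι j = some p) :
    o j ∈ M.lam p (ι j) := by
  rcases hsat with ⟨qs, h0, hs⟩ | ⟨k, qs, h0, hs, hk⟩
  · rw [trace_eq_some_of_run h0 (fun j _ => (hs j).1) j le_rfl, Option.some_inj] at hp
    exact hp ▸ (hs j).2
  · have htr := trace_eq_some_of_run h0 (fun j hj => (hs j hj).1)
    rcases lt_trichotomy j k with hj | rfl | hj
    · rw [htr j hj.le, Option.some_inj] at hp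
      exact hp ▸ (hs j hj).2
    · rw [htr j le_rfl, Option.some_inj] at hp
      simp [← hp, M.lam_top _ _ hk]
    · have hstop : M.trace q ι (k + 1) = none := by
        rw [trace_succ_of_eq_some (htr k le_rfl), hk]
      simp [trace_eq_none_of_le hstop hj] at hp

theorem sat_of_forall_trace (h : ∀ j p, M.trace q ι j = some p → o j ∈ M.lam p (ι j)) :
    M.Sat q ι o := by
  set qs : ℕ → Q := fun j => (M.trace q ι j).getD q
  have step : ∀ j, M.trace q ι (j + 1) ≠ none →
      M.delta (qs j) (ι j) = some (qs (j + 1)) ∧ o j ∈ M.lam (qs j) (ι j) := by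
    intro j hj
    obtain ⟨p, hp⟩ := Option.ne_none_iff_exists'.mp
      fun h' => hj (trace_eq_none_of_le h' j.le_succ)
    obtain ⟨p', hp'⟩ := Option.ne_none_iff_exists'.mp hj
    simp only [qs, hp, hp', Option.getD_some]
    exact ⟨(trace_succ_of_eq_some hp).symm.trans hp', h j p hp⟩
  by_cases hstop : ∃ k p, M.trace q ι k = some p ∧ M.delta p (ι k) = none
  · obtain ⟨k, p, hp, hk⟩ := hstop
    refine Or.inr ⟨k, qs, rfl, fun j hj => step j fun h' => ?_, by simpa [qs, hp] using hk⟩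
    simp [trace_eq_none_of_le h' hj] at hp
  · push Not at hstop
    have hdef : ∀ j, M.trace q ι j ≠ none := by
      intro j
      induction j with
      | zero => simp
      | succ j ih =>
        obtain ⟨p, hp⟩ := Option.ne_none_iff_exists'.mp ih
        rw [trace_succ_of_eq_some hp]
        exact hstop j p hp
    exact Or.inl ⟨qs, rfl, fun j => step j (hdef (j + 1))⟩

theorem sat_iff_forall_trace :
    M.Sat q ι o ↔ ∀ j p, M.trace q ι j = some p → o j ∈ M.lam p (ι j) :=
  ⟨fun hsat _ _ => hsat.mem_lam_of_trace, sat_of_forall_trace⟩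

theorem sat_of_delta_eq_none (h : M.delta q (ι 0) = none) : M.Sat q ι o :=
  Or.inr ⟨0, fun _ => q, rfl, by simp, h⟩

theorem sat_iff_of_delta_eq_some {q₁ : Q} (h : M.delta q (ι 0) = some q₁) :
    M.Sat q ι o ↔
      o 0 ∈ M.lam q (ι 0) ∧ M.Sat q₁ (fun j => ι (j + 1)) (fun j => o (j + 1)) := by
  simp only [sat_iff_forall_trace, ← trace_succ_of_delta_eq_some h]
  constructor
  · exact fun ho => ⟨ho 0 q rfl, fun j => ho (j + 1)⟩
  · rintro ⟨ho₀, ho⟩ (_ | j) p hp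
    · exact Option.some_inj.mp hp ▸ ho₀
    · exact ho j p hp

theorem beh_nonempty : (M.Beh q ι).Nonempty := by
  refine ⟨fun j => ((M.trace q ι j).map fun p => (M.lam_nonempty p (ι j)).some).getD
    fun _ => false, sat_iff_forall_trace.mpr fun j p hp => ?_⟩
  simpa [hp] using (M.lam_nonempty p (ι j)).some_mem

variable (M) in
def IsPrefixOfBeh (q : Q) (ι : ℕ → I → Bool) (o : ℕ → O → Bool) (n : ℕ) : Prop :=
  ∃ o' ∈ M.Beh q ι, ∀ j < n, o' j = o j

theorem isPrefixOfBeh_zero : M.IsPrefixOfBeh q ι o 0 :=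
  let ⟨o', ho'⟩ := M.beh_nonempty (q := q) (ι := ι)
  ⟨o', ho', by simp⟩

theorem isPrefixOfBeh_succ {q₁ : Q} {n : ℕ} (h : M.delta q (ι 0) = some q₁)
    (ho : o 0 ∈ M.lam q (ι 0))
    (hpre : M.IsPrefixOfBeh q₁ (fun j => ι (j + 1)) (fun j => o (j + 1)) n) :
    M.IsPrefixOfBeh q ι o (n + 1) := by
  obtain ⟨o', ho', hagree⟩ := hpre
  refine ⟨fun | 0 => o 0 | j + 1 => o' j, (sat_iff_of_delta_eq_some h).mpr ⟨ho, ho'⟩, ?_⟩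
  rintro (_ | j) hj
  · rfl
  · exact hagree j (by omega)

theorem sat_of_forall_isPrefixOfBeh (h : ∀ n, M.IsPrefixOfBeh q ι o n) : M.Sat q ι o := by
  refine sat_iff_forall_trace.mpr fun j p hp => ?_
  obtain ⟨o', ho', hagree⟩ := h (j + 1)
  exact hagree j j.lt_succ_self ▸ sat_iff_forall_trace.mp ho' j p hp

theorem Specializes.trans {Q' Q'' : Type*} {M' : IGMM I O Q'} {M'' : IGMM I O Q''} {q' : Q'}
    {q'' : Q''} (h₁ : M''.Specializes q'' M' q') (h₂ : M'.Specializes q' M q) :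
    M''.Specializes q'' M q :=
  fun ι => (h₁ ι).trans (h₂ ι)

theorem remap_mk_specializes {r : Q → Q} (hr : ∀ q : Q, M.Specializes (r q) M q) (q : Q) :
    (M.remap r).Specializes ⟨r q, q, rfl⟩ M (r q) := by
  suffices ∀ n q ι o, (M.remap r).Sat ⟨r q, q, rfl⟩ ι o → M.IsPrefixOfBeh (r q) ι o n from
    fun ι o h => sat_of_forall_isPrefixOfBeh fun n => this n q ι o h
  intro n
  induction n with
  | zero => exact fun _ _ _ _ => isPrefixOfBeh_zero
  | succ n ih =>
    intro q ι o h
    cases hδ : M.delta (r q) (ι 0) with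
    | none => exact ⟨o, sat_of_delta_eq_none hδ, fun _ _ => rfl⟩
    | some p =>
      have hδ' : (M.remap r).delta ⟨r q, q, rfl⟩ (ι 0) = some ⟨r p, p, rfl⟩ := by
        simp [remap, hδ]
      obtain ⟨ho, htail⟩ := (sat_iff_of_delta_eq_some hδ').mp h
      obtain ⟨o', ho', hagree⟩ := ih p _ _ htail
      exact isPrefixOfBeh_succ hδ ho ⟨o', hr p _ ho', hagree⟩

end IGMM

theorem remap_specializes {I O Q : Type*}
    (M : IGMM I O Q) (r : Q → Q)
    (hr : ∀ q : Q, IGMM.Specializes M (r q) M q) :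
    IGMM.Specializes (M.remap r) (M.remap r).init M M.init :=
  (M.remap_mk_specializes hr M.init).trans (hr M.init)
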